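/- Let α, β, k > 0 and 0 < p < q with k·p < 1 and k·q > 1, and let γ := Γ((1−k·p)/(q−p))·Γ((k·q−1)/(q−p)) / (α^k·Γ(k)·(q−p)) · (α/β)^((1−k·p)/(q−p)). Let T_c > 0, let Φ : ℝ → ℝ be continuous and strictly positive on (0, ∞), integrable on (0, τ) for each τ > 0, with ∫₀^∞ Φ(ξ) dξ = 1, let ψ(τ) := T_c·∫₀^τ Φ(ξ) dξ with inverse ψ⁻¹ : [0, T_c) → [0, ∞), and let t₀ ∈ ℝ. Suppose x : ℝ → ℝ satisfies, for every t ∈ (t₀, t₀ + T_c), that x is differentiable at t with derivative x'(t) = −(1/(T_c·Φ(ψ⁻¹(t − t₀)))) · (α·|x(t)|^p + β·|x(t)|^q)^k · sign(x(t)), and x is continuous at t₀. Then x(t) = 0 for every t ∈ [t₀ + ψ(γ), t₀ + T_c). (Scalar prototype of the non-autonomous protocol of Theorem 5: the bounded time-varying gain enforces convergence strictly before the predefined time t₀ + T_c, with a less conservative settling-time bound t₀ + ψ(γ).) -/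

import Mathlib

/-!
In the new time `τ = ψ⁻¹(t - t₀)` the gain `1 / (T_c Φ(τ))` cancels against `ψ'(τ) = T_c Φ(τ)`,
so `y(τ) = x(t₀ + ψ(τ))` solves the autonomous equation `y' = -h(|y|) sign y` with
`h(z) = (α z^p + β z^q)^k`. As long as `y ≠ 0`, the quantity `G(|y(τ)|) + τ` is constant, where
`G(v) = ∫₀^v dz / h(z)`. Since `G < ∫₀^∞ dz / h(z) = γ`, the solution must vanish by `τ = γ`, and
`y²` is nonincreasing, so it stays at `0`. The substitution `u = (β/α) z^(q-p)` turns
`∫₀^∞ (α z^p + β z^q)^(-k) dz` into a Beta integral, which gives the value `γ`.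
-/

open Real MeasureTheory Set

lemma ofReal_rpow_mul_one_sub_rpow {a b x : ℝ} (hx : x ∈ Icc 0 1) :
    ((x ^ (a - 1) * (1 - x) ^ (b - 1) : ℝ) : ℂ) =
      (x : ℂ) ^ ((a : ℂ) - 1) * (1 - (x : ℂ)) ^ ((b : ℂ) - 1) := by
  rw [Complex.ofReal_mul, Complex.ofReal_cpow hx.1, Complex.ofReal_cpow (sub_nonneg.2 hx.2)]
  push_cast
  rfl

lemma intervalIntegrable_rpow_mul_one_sub_rpow {a b : ℝ} (ha : 0 < a) (hb : 0 < b) :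
    IntervalIntegrable (fun x : ℝ => x ^ (a - 1) * (1 - x) ^ (b - 1)) volume 0 1 := by
  have hc := Complex.betaIntegral_convergent (u := a) (v := b) (by simpa) (by simpa)
  rw [intervalIntegrable_iff_integrableOn_Ioc_of_le zero_le_one] at hc ⊢
  refine IntegrableOn.congr_fun (Integrable.re hc) (fun x hx => ?_) measurableSet_Ioc
  simp only [← ofReal_rpow_mul_one_sub_rpow (Ioc_subset_Icc_self hx), RCLike.re_to_complex,
    Complex.ofReal_re]

lemma integral_rpow_mul_one_sub_rpow {a b : ℝ} (ha : 0 < a) (hb : 0 < b) :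
    ∫ x in (0 : ℝ)..1, x ^ (a - 1) * (1 - x) ^ (b - 1) = Gamma a * Gamma b / Gamma (a + b) := by
  have key := Complex.Gamma_mul_Gamma_eq_betaIntegral (s := a) (t := b) (by simpa) (by simpa)
  rw [Complex.betaIntegral, ← intervalIntegral.integral_congr (fun x hx =>
    ofReal_rpow_mul_one_sub_rpow (by rwa [uIcc_of_le zero_le_one] at hx)),
    intervalIntegral.integral_ofReal, ← Complex.ofReal_add, Complex.Gamma_ofReal,
    Complex.Gamma_ofReal, Complex.Gamma_ofReal] at key
  rw [eq_div_iff (Gamma_pos_of_pos (add_pos ha hb)).ne', mul_comm]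
  exact_mod_cast key.symm

lemma image_div_one_sub_Ioo : (fun x : ℝ => x / (1 - x)) '' Ioo 0 1 = Ioi 0 := by
  ext u
  refine ⟨?_, fun hu => ⟨u / (1 + u), ?_, ?_⟩⟩
  · rintro ⟨x, ⟨hx0, hx1⟩, rfl⟩
    exact div_pos hx0 (sub_pos.2 hx1)
  · have hu : 0 < u := hu
    exact ⟨by positivity, (div_lt_one (by positivity)).2 (by linarith)⟩
  · have hu : 0 < u := hu
    field_simp
    ring

lemma injOn_div_one_sub : InjOn (fun x : ℝ => x / (1 - x)) (Ioo 0 1) := by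
  intro x hx y hy hxy
  have := (sub_pos.2 hx.2).ne'
  have := (sub_pos.2 hy.2).ne'
  field_simp at hxy
  linarith

lemma hasDerivAt_div_one_sub {x : ℝ} (hx : x ≠ 1) :
    HasDerivAt (fun x : ℝ => x / (1 - x)) ((1 - x) ^ 2)⁻¹ x := by
  have h : HasDerivAt (fun y : ℝ => y / (1 - y)) ((1 * (1 - x) - x * (0 - 1)) / (1 - x) ^ 2) x :=
    (hasDerivAt_id x).div ((hasDerivAt_const x 1).sub (hasDerivAt_id x)) (sub_ne_zero.2 hx.symm)
  convert h using 1
  ring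

lemma integral_Ioi_eq_integral_Ioo_div_one_sub (g : ℝ → ℝ) :
    ∫ u in Ioi 0, g u = ∫ x in Ioo 0 1, ((1 - x) ^ 2)⁻¹ * g (x / (1 - x)) := by
  rw [← image_div_one_sub_Ioo, integral_image_eq_integral_abs_deriv_smul measurableSet_Ioo
    (fun x hx => (hasDerivAt_div_one_sub hx.2.ne).hasDerivWithinAt) injOn_div_one_sub]
  exact setIntegral_congr_fun measurableSet_Ioo fun x _ => by simp

lemma integrableOn_Ioi_iff_integrableOn_Ioo_div_one_sub (g : ℝ → ℝ) :
    IntegrableOn g (Ioi 0) ↔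
      IntegrableOn (fun x => ((1 - x) ^ 2)⁻¹ * g (x / (1 - x))) (Ioo 0 1) := by
  rw [← image_div_one_sub_Ioo, integrableOn_image_iff_integrableOn_abs_deriv_smul measurableSet_Ioo
    (fun x hx => (hasDerivAt_div_one_sub hx.2.ne).hasDerivWithinAt) injOn_div_one_sub]
  exact integrableOn_congr_fun (fun x _ => by simp) measurableSet_Ioo

lemma rpow_mul_one_add_rpow_div_one_sub {a b x : ℝ} (hx : x ∈ Ioo 0 1) :
    ((1 - x) ^ 2)⁻¹ * ((x / (1 - x)) ^ (a - 1) * (1 + x / (1 - x)) ^ (-(a + b))) =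
      x ^ (a - 1) * (1 - x) ^ (b - 1) := by
  have hx1 : 0 < 1 - x := sub_pos.2 hx.2
  have h1 : 1 + x / (1 - x) = (1 - x)⁻¹ := by field_simp; ring
  rw [h1, div_rpow hx.1.le hx1.le, inv_rpow hx1.le, rpow_neg hx1.le, inv_inv, ← rpow_two]
  rw [div_eq_mul_inv, ← rpow_neg hx1.le, ← rpow_neg hx1.le]
  have : (1 - x) ^ (-(2:ℝ)) * (1 - x) ^ (-(a - 1)) * (1 - x) ^ (a + b) = (1 - x) ^ (b - 1) := by
    rw [← rpow_add hx1, ← rpow_add hx1]; ring_nf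
  rw [← this]; ring

lemma integrableOn_rpow_mul_one_add_rpow {a b : ℝ} (ha : 0 < a) (hb : 0 < b) :
    IntegrableOn (fun u : ℝ => u ^ (a - 1) * (1 + u) ^ (-(a + b))) (Ioi 0) := by
  rw [integrableOn_Ioi_iff_integrableOn_Ioo_div_one_sub]
  refine IntegrableOn.congr_fun ?_ (fun x hx => (rpow_mul_one_add_rpow_div_one_sub hx).symm)
    measurableSet_Ioo
  exact ((intervalIntegrable_iff_integrableOn_Ioc_of_le zero_le_one).1
    (intervalIntegrable_rpow_mul_one_sub_rpow ha hb)).mono_set Ioo_subset_Ioc_self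

lemma integral_rpow_mul_one_add_rpow {a b : ℝ} (ha : 0 < a) (hb : 0 < b) :
    ∫ u in Ioi 0, u ^ (a - 1) * (1 + u) ^ (-(a + b)) = Gamma a * Gamma b / Gamma (a + b) := by
  rw [integral_Ioi_eq_integral_Ioo_div_one_sub, setIntegral_congr_fun measurableSet_Ioo
    fun x hx => rpow_mul_one_add_rpow_div_one_sub hx, ← integral_Ioc_eq_integral_Ioo,
    ← intervalIntegral.integral_of_le zero_le_one, integral_rpow_mul_one_sub_rpow ha hb]

lemma integral_Ioi_comp_mul_rpow (g : ℝ → ℝ) {c r : ℝ} (hc : 0 < c) (hr : 0 < r) :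
    ∫ z in Ioi 0, c * r * z ^ (r - 1) * g (c * z ^ r) = ∫ u in Ioi 0, g u := by
  have h := integral_comp_rpow_Ioi_of_pos (g := fun y => c * g (c * y)) hr
  simp only [smul_eq_mul, integral_const_mul] at h
  have h' := integral_comp_mul_left_Ioi' g 0 hc
  rw [mul_zero, smul_eq_mul] at h'
  rw [← h', ← h]
  exact setIntegral_congr_fun measurableSet_Ioi fun z _ => by ring

lemma IntegrableOn.comp_mul_rpow {g : ℝ → ℝ} (hg : IntegrableOn g (Ioi 0)) {c r : ℝ} (hc : 0 < c)
    (hr : 0 < r) : IntegrableOn (fun z => c * r * z ^ (r - 1) * g (c * z ^ r)) (Ioi 0) := by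
  have h : IntegrableOn (fun y => c * g (c * y)) (Ioi 0) :=
    (((integrableOn_Ioi_comp_mul_left_iff g 0 hc).2 (by rwa [mul_zero])).const_mul c)
  have := (integrableOn_Ioi_comp_rpow_iff _ hr.ne').2 h
  refine this.congr_fun (fun z _ => ?_) measurableSet_Ioi
  simp only [smul_eq_mul, abs_of_pos hr]
  ring

lemma rpow_mul_one_add_mul_rpow_eq {a b c r z : ℝ} (hc : 0 < c) (hr : r ≠ 0) (hz : 0 < z) :
    z ^ (r * a - 1) * (1 + c * z ^ r) ^ (-(a + b)) =
      (r * c ^ a)⁻¹ *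
        (c * r * z ^ (r - 1) * ((c * z ^ r) ^ (a - 1) * (1 + c * z ^ r) ^ (-(a + b)))) := by
  have hca : c * c ^ (a - 1) = c ^ a := by
    rw [mul_comm, ← rpow_add_one hc.ne', sub_add_cancel]
  have hza : z ^ (r - 1) * z ^ (r * (a - 1)) = z ^ (r * a - 1) := by
    rw [← rpow_add hz]; ring_nf
  rw [mul_rpow hc.le (rpow_nonneg hz.le r), ← rpow_mul hz.le]
  calc z ^ (r * a - 1) * (1 + c * z ^ r) ^ (-(a + b))
      = (r * c ^ a)⁻¹ * (r * (c * c ^ (a - 1)) * (z ^ (r - 1) * z ^ (r * (a - 1))) *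
          (1 + c * z ^ r) ^ (-(a + b))) := by
        rw [hca, hza]; field_simp
    _ = _ := by ring

lemma integral_rpow_mul_one_add_mul_rpow {a b c r : ℝ} (ha : 0 < a) (hb : 0 < b) (hc : 0 < c)
    (hr : 0 < r) :
    IntegrableOn (fun z : ℝ => z ^ (r * a - 1) * (1 + c * z ^ r) ^ (-(a + b))) (Ioi 0) ∧
    ∫ z in Ioi 0, z ^ (r * a - 1) * (1 + c * z ^ r) ^ (-(a + b)) =
      Gamma a * Gamma b / Gamma (a + b) / (r * c ^ a) := by
  have key : EqOn (fun z : ℝ => z ^ (r * a - 1) * (1 + c * z ^ r) ^ (-(a + b)))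
      (fun z => (r * c ^ a)⁻¹ * (c * r * z ^ (r - 1) *
        ((c * z ^ r) ^ (a - 1) * (1 + c * z ^ r) ^ (-(a + b))))) (Ioi 0) :=
    fun z hz => rpow_mul_one_add_mul_rpow_eq hc hr.ne' hz
  refine ⟨?_, ?_⟩
  · refine IntegrableOn.congr_fun ?_ key.symm measurableSet_Ioi
    exact (IntegrableOn.comp_mul_rpow (integrableOn_rpow_mul_one_add_rpow ha hb) hc hr).const_mul _
  · rw [setIntegral_congr_fun measurableSet_Ioi key, integral_const_mul,
      integral_Ioi_comp_mul_rpow (fun u => u ^ (a - 1) * (1 + u) ^ (-(a + b))) hc hr,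
      integral_rpow_mul_one_add_rpow ha hb, div_eq_inv_mul _ (r * c ^ a)]

lemma add_rpow_rpow_neg_eq {α β k p q z : ℝ} (hα : 0 < α) (hβ : 0 ≤ β) (hz : 0 < z) :
    (α * z ^ p + β * z ^ q) ^ (-k) =
      α ^ (-k) * (z ^ (-(k * p)) * (1 + β / α * z ^ (q - p)) ^ (-k)) := by
  have hfac : α * z ^ p + β * z ^ q = α * z ^ p * (1 + β / α * z ^ (q - p)) := by
    rw [rpow_sub hz]; field_simp
  rw [hfac, mul_rpow (by positivity) (by positivity), mul_rpow hα.le (by positivity),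
    ← rpow_mul hz.le]
  ring_nf

lemma integral_add_rpow_rpow_neg {α β k p q : ℝ} (hα : 0 < α) (hβ : 0 < β) (hpq : p < q)
    (hkp : k * p < 1) (hkq : 1 < k * q) :
    IntegrableOn (fun z : ℝ => (α * z ^ p + β * z ^ q) ^ (-k)) (Ioi 0) ∧
    ∫ z in Ioi 0, (α * z ^ p + β * z ^ q) ^ (-k) =
      Gamma ((1 - k * p) / (q - p)) * Gamma ((k * q - 1) / (q - p)) /
        (α ^ k * Gamma k * (q - p)) * (α / β) ^ ((1 - k * p) / (q - p)) := by
  set r := q - p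
  set a := (1 - k * p) / r
  set b := (k * q - 1) / r
  have hr : 0 < r := sub_pos.2 hpq
  have ha : 0 < a := div_pos (by linarith) hr
  have hb : 0 < b := div_pos (by linarith) hr
  have hra : r * a - 1 = -(k * p) := by simp only [a]; field_simp; ring
  have hab : a + b = k := by
    rw [← add_div, div_eq_iff hr.ne']; ring
  have key : EqOn (fun z : ℝ => (α * z ^ p + β * z ^ q) ^ (-k))
      (fun z => α ^ (-k) * (z ^ (r * a - 1) * (1 + β / α * z ^ r) ^ (-(a + b)))) (Ioi 0) :=
    fun z hz => by rw [hra, hab]; exact add_rpow_rpow_neg_eq hα hβ.le hz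
  obtain ⟨hint, hval⟩ := integral_rpow_mul_one_add_mul_rpow ha hb (div_pos hβ hα) hr
  refine ⟨IntegrableOn.congr_fun (hint.const_mul _) key.symm measurableSet_Ioi, ?_⟩
  rw [setIntegral_congr_fun measurableSet_Ioi key, integral_const_mul, hval, hab,
    ← inv_div α β, inv_rpow (div_pos hα hβ).le, rpow_neg hα.le]
  have hΓk := Gamma_pos_of_pos (hab ▸ add_pos ha hb)
  field_simp

section Primitive

variable {f : ℝ → ℝ} {a : ℝ}

lemma intervalIntegrable_of_integrableOn_Ioi (hf : IntegrableOn f (Ioi a)) ⦃u v : ℝ⦄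
    (hu : a ≤ u) (hv : a ≤ v) : IntervalIntegrable f volume u v :=
  ⟨hf.mono_set (Ioc_subset_Ioi_self.trans (Ioi_subset_Ioi hu)),
    hf.mono_set (Ioc_subset_Ioi_self.trans (Ioi_subset_Ioi hv))⟩

lemma continuousOn_primitive_Ici (hf : IntegrableOn f (Ioi a)) :
    ContinuousOn (fun v => ∫ z in a..v, f z) (Ici a) := by
  intro w hw
  have hIcc : ContinuousWithinAt (fun v => ∫ z in a..v, f z) (Icc a (w + 1)) w :=
    intervalIntegral.continuousWithinAt_primitive (measure_singleton w)
      (intervalIntegrable_of_integrableOn_Ioi hf (by simp) (le_max_left _ _))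
  refine hIcc.mono_of_mem_nhdsWithin ?_
  rw [← Ici_inter_Iic]
  exact inter_mem_nhdsWithin _ (Iic_mem_nhds (lt_add_one w))

lemma hasDerivAt_primitive_of_continuousOn_Ioi (hf : IntegrableOn f (Ioi a))
    (hcont : ContinuousOn f (Ioi a)) {w : ℝ} (hw : a < w) :
    HasDerivAt (fun v => ∫ z in a..v, f z) (f w) w :=
  intervalIntegral.integral_hasDerivAt_right
    (intervalIntegrable_of_integrableOn_Ioi hf le_rfl hw.le)
    (hcont.stronglyMeasurableAtFilter isOpen_Ioi w hw) (hcont.continuousAt (Ioi_mem_nhds hw))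

lemma strictMonoOn_primitive_Ici (hf : IntegrableOn f (Ioi a)) (hpos : ∀ z, a < z → 0 < f z) :
    StrictMonoOn (fun v => ∫ z in a..v, f z) (Ici a) := by
  intro u hu v hv huv
  have hI := intervalIntegrable_of_integrableOn_Ioi hf
  dsimp only
  rw [← sub_pos, intervalIntegral.integral_interval_sub_left (hI le_rfl hv) (hI le_rfl hu)]
  exact intervalIntegral.intervalIntegral_pos_of_pos_on (hI hu hv)
    (fun z hz => hpos z (lt_of_le_of_lt hu hz.1)) huv

lemma primitive_lt_integral_Ioi (hf : IntegrableOn f (Ioi a)) (hpos : ∀ z, a < z → 0 < f z)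
    {v : ℝ} (hv : a ≤ v) : ∫ z in a..v, f z < ∫ z in Ioi a, f z :=
  calc ∫ z in a..v, f z < ∫ z in a..v + 1, f z :=
        strictMonoOn_primitive_Ici hf hpos hv (by simp; linarith) (lt_add_one v)
    _ ≤ ∫ z in Ioi a, f z := by
        rw [intervalIntegral.integral_of_le (by linarith)]
        refine setIntegral_mono_set hf ?_ Ioc_subset_Ioi_self.eventuallyLE
        filter_upwards [ae_restrict_mem measurableSet_Ioi] with z hz using (hpos z hz).le

end Primitive

lemma antitoneOn_sq_of_mul_deriv_nonpos {x x' : ℝ → ℝ} {s : Set ℝ} (hs : Convex ℝ s)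
    (hx : ∀ t ∈ s, HasDerivAt x (x' t) t) (hxx' : ∀ t ∈ s, x t * x' t ≤ 0) :
    AntitoneOn (fun t => x t ^ 2) s := by
  have hd : ∀ t ∈ s, HasDerivAt (fun t => x t ^ 2) (2 * (x t * x' t)) t := fun t ht =>
    ((hx t ht).pow 2).congr_deriv (by simp; ring)
  refine antitoneOn_of_hasDerivWithinAt_nonpos hs
    (fun t ht => (hd t ht).continuousAt.continuousWithinAt)
    (fun t ht => (hd t (interior_subset ht)).hasDerivWithinAt) fun t ht => ?_
  linarith [hxx' t (interior_subset ht)]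

lemma hasDerivAt_comp_abs_add_id_of_neg_mul_sign {G h y : ℝ → ℝ} {τ : ℝ}
    (hG : HasDerivAt G (h |y τ|)⁻¹ |y τ|) (hy : HasDerivAt y (-h |y τ| * Real.sign (y τ)) τ)
    (hyτ : y τ ≠ 0) (hh : h |y τ| ≠ 0) : HasDerivAt (fun σ => G |y σ| + σ) 0 τ := by
  have hd : HasDerivAt (fun σ => G |y σ| + σ)
      ((h |y τ|)⁻¹ * ((SignType.sign (y τ) : ℝ) * (-h |y τ| * Real.sign (y τ))) + 1) τ :=
    (hG.comp τ ((hasDerivAt_abs hyτ).comp τ hy)).add (hasDerivAt_id τ)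
  convert hd using 1
  rcases hyτ.lt_or_gt with hneg | hpos
  · simp [hneg, Real.sign_of_neg hneg, hh]
  · simp [hpos, Real.sign_of_pos hpos, hh]

section ScalarODE

variable {h y : ℝ → ℝ}

lemma exists_eq_zero_of_hasDerivAt_neg_mul_sign (hcont : ContinuousOn h (Ioi 0))
    (hpos : ∀ z, 0 < z → 0 < h z) (hint : IntegrableOn (fun z => (h z)⁻¹) (Ioi 0))
    (hy : ∀ τ, 0 < τ → HasDerivAt y (-h |y τ| * Real.sign (y τ)) τ)
    (hy0 : ContinuousWithinAt y (Ici 0) 0) :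
    ∃ σ ∈ Ioc 0 (∫ z in Ioi 0, (h z)⁻¹), y σ = 0 := by
  set T := ∫ z in Ioi 0, (h z)⁻¹
  set G := fun v => ∫ z in (0 : ℝ)..v, (h z)⁻¹
  have hinv_pos : ∀ z, 0 < z → 0 < (h z)⁻¹ := fun z hz => inv_pos.2 (hpos z hz)
  have hG_lt : ∀ v, 0 ≤ v → G v < T := fun v hv => primitive_lt_integral_Ioi hint hinv_pos hv
  have hG_nonneg : ∀ v, 0 ≤ v → 0 ≤ G v := fun v hv => by
    simpa [G] using (strictMonoOn_primitive_Ici hint hinv_pos).monotoneOn self_mem_Ici hv hv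
  have hT : 0 < T := by simpa [G] using hG_lt 0 le_rfl
  by_contra! hne
  have hV : ∀ σ ∈ Ioc 0 T, HasDerivAt (fun σ => G |y σ| + σ) 0 σ := fun σ hσ =>
    hasDerivAt_comp_abs_add_id_of_neg_mul_sign
      (hasDerivAt_primitive_of_continuousOn_Ioi hint (hcont.inv₀ fun z hz => (hpos z hz).ne')
        (abs_pos.2 (hne σ hσ)))
      (hy σ hσ.1) (hne σ hσ) (hpos _ (abs_pos.2 (hne σ hσ))).ne'
  have hVc : ContinuousOn (fun σ => G |y σ| + σ) (Icc 0 T) := by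
    intro σ hσ
    rcases hσ.1.eq_or_lt with rfl | hσ0
    · refine (ContinuousWithinAt.add ?_ continuousWithinAt_id).mono Icc_subset_Ici_self
      exact ContinuousWithinAt.comp (f := fun σ => |y σ|)
        (continuousOn_primitive_Ici hint _ (mem_Ici.2 (abs_nonneg _))) hy0.abs
        fun _ _ => mem_Ici.2 (abs_nonneg _)
    · exact (hV σ ⟨hσ0, hσ.2⟩).continuousAt.continuousWithinAt
  obtain ⟨c, -, hc⟩ := exists_hasDerivAt_eq_slope _ (fun _ => 0) hT hVc
    fun σ hσ => hV σ (Ioo_subset_Ioc_self hσ)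
  have hVeq : G |y T| + T = G |y 0| + 0 := by
    rw [eq_comm, div_eq_zero_iff, sub_eq_zero] at hc
    exact hc.resolve_right (sub_ne_zero.2 hT.ne')
  linarith [hG_lt _ (abs_nonneg (y 0)), hG_nonneg _ (abs_nonneg (y T))]

theorem eq_zero_of_hasDerivAt_neg_mul_sign (hcont : ContinuousOn h (Ioi 0))
    (hpos : ∀ z, 0 < z → 0 < h z) (hint : IntegrableOn (fun z => (h z)⁻¹) (Ioi 0))
    (hy : ∀ τ, 0 < τ → HasDerivAt y (-h |y τ| * Real.sign (y τ)) τ)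
    (hy0 : ContinuousWithinAt y (Ici 0) 0) {τ : ℝ} (hτ : ∫ z in Ioi 0, (h z)⁻¹ ≤ τ) :
    y τ = 0 := by
  obtain ⟨σ, hσ, hyσ⟩ := exists_eq_zero_of_hasDerivAt_neg_mul_sign hcont hpos hint hy hy0
  have hmul : ∀ t ∈ Ioi (0 : ℝ), y t * (-h |y t| * Real.sign (y t)) ≤ 0 := fun t ht => by
    rcases eq_or_ne (y t) 0 with h0 | h0
    · simp [h0]
    · nlinarith [hpos _ (abs_pos.2 h0), Real.sign_mul_nonneg (y t)]
  have hsq := antitoneOn_sq_of_mul_deriv_nonpos (convex_Ioi 0) hy hmul hσ.1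
    (mem_Ioi.2 (hσ.1.trans_le (hσ.2.trans hτ))) (hσ.2.trans hτ)
  simp only [hyσ] at hsq
  exact (sq_nonpos_iff _).1 (by simpa using hsq)

end ScalarODE

theorem eq_zero_of_hasDerivAt_neg_add_rpow_rpow_mul_sign {α β k p q : ℝ} (hα : 0 < α)
    (hβ : 0 < β) (hpq : p < q) (hkp : k * p < 1) (hkq : 1 < k * q) {y : ℝ → ℝ}
    (hy : ∀ τ, 0 < τ →
      HasDerivAt y (-(α * |y τ| ^ p + β * |y τ| ^ q) ^ k * Real.sign (y τ)) τ)
    (hy0 : ContinuousWithinAt y (Ici 0) 0) {τ : ℝ}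
    (hτ : Gamma ((1 - k * p) / (q - p)) * Gamma ((k * q - 1) / (q - p)) /
        (α ^ k * Gamma k * (q - p)) * (α / β) ^ ((1 - k * p) / (q - p)) ≤ τ) :
    y τ = 0 := by
  set h := fun z : ℝ => (α * z ^ p + β * z ^ q) ^ k
  have hh_pos : ∀ z, 0 < z → 0 < h z := fun z hz => by positivity
  have hh_cont : ContinuousOn h (Ioi 0) := fun z (hz : 0 < z) =>
    (ContinuousAt.rpow_const (by fun_prop (disch := exact Or.inl hz.ne'))
      (Or.inl (by positivity))).continuousWithinAt
  have hh_inv : EqOn (fun z => (h z)⁻¹) (fun z => (α * z ^ p + β * z ^ q) ^ (-k)) (Ioi 0) :=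
    fun z (hz : 0 < z) => (rpow_neg (by positivity) k).symm
  obtain ⟨hint, hval⟩ := integral_add_rpow_rpow_neg hα hβ hpq hkp hkq
  refine eq_zero_of_hasDerivAt_neg_mul_sign hh_cont hh_pos
    (IntegrableOn.congr_fun hint hh_inv.symm measurableSet_Ioi) hy hy0 ?_
  rwa [setIntegral_congr_fun measurableSet_Ioi hh_inv, hval]

theorem nonautonomous_scalar_predefined_time_general
    (α β k p q : ℝ) (hα : 0 < α) (hβ : 0 < β)
    (hpq : p < q) (hkp : k * p < 1) (hkq : 1 < k * q)
    (γ : ℝ)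
    (hγ : γ = Real.Gamma ((1 - k * p) / (q - p)) * Real.Gamma ((k * q - 1) / (q - p)) /
        (α ^ k * Real.Gamma k * (q - p)) * (α / β) ^ ((1 - k * p) / (q - p)))
    (Tc : ℝ) (hTc : 0 < Tc)
    (Φ : ℝ → ℝ)
    (hcont : ContinuousOn Φ (Set.Ioi 0))
    (hpos : ∀ τ : ℝ, 0 < τ → 0 < Φ τ)
    (hIoi : IntegrableOn Φ (Set.Ioi 0))
    (hone : ∫ ξ in Set.Ioi (0 : ℝ), Φ ξ = 1)
    (ψ : ℝ → ℝ)
    (hψ : ∀ τ : ℝ, ψ τ = Tc * ∫ ξ in (0 : ℝ)..τ, Φ ξ)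
    (ψinv : ℝ → ℝ)
    (hinv_left : ∀ τ : ℝ, 0 ≤ τ → ψinv (ψ τ) = τ)
    (hinv_right : ∀ s ∈ Set.Ico (0 : ℝ) Tc, 0 ≤ ψinv s ∧ ψ (ψinv s) = s)
    (t₀ : ℝ)
    (x : ℝ → ℝ)
    (hx : ∀ t ∈ Set.Ioo t₀ (t₀ + Tc),
      HasDerivAt x
        (-(1 / (Tc * Φ (ψinv (t - t₀)))) *
          (α * |x t| ^ p + β * |x t| ^ q) ^ k * Real.sign (x t)) t)
    (hx₀ : ContinuousAt x t₀) :
    ∀ t ∈ Set.Ico (t₀ + ψ γ) (t₀ + Tc), x t = 0 := by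
  have hψ0 : ψ 0 = 0 := by simp [hψ]
  have hψ_mono : StrictMonoOn ψ (Ici 0) := fun u hu v hv huv => by
    simpa only [hψ] using
      mul_lt_mul_of_pos_left (strictMonoOn_primitive_Ici hIoi hpos hu hv huv) hTc
  have hψ_lt : ∀ τ, 0 ≤ τ → ψ τ < Tc := fun τ hτ => by
    simpa [hψ, hone] using mul_lt_mul_of_pos_left (primitive_lt_integral_Ioi hIoi hpos hτ) hTc
  have hψ_cont : ContinuousWithinAt ψ (Ici 0) 0 := by
    rw [funext hψ]
    exact continuousWithinAt_const.mul (continuousOn_primitive_Ici hIoi 0 self_mem_Ici)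
  have hy : ∀ τ, 0 < τ → HasDerivAt (fun σ => x (t₀ + ψ σ))
      (-(α * |x (t₀ + ψ τ)| ^ p + β * |x (t₀ + ψ τ)| ^ q) ^ k * Real.sign (x (t₀ + ψ τ))) τ := by
    intro τ hτ
    have hψ' : HasDerivAt ψ (Tc * Φ τ) τ := by
      rw [funext hψ]; exact (hasDerivAt_primitive_of_continuousOn_Ioi hIoi hcont hτ).const_mul Tc
    have hmem : t₀ + ψ τ ∈ Ioo t₀ (t₀ + Tc) :=
      ⟨by linarith [hψ0 ▸ hψ_mono self_mem_Ici hτ.le hτ], by linarith [hψ_lt τ hτ.le]⟩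
    have hxτ := (hx _ hmem).comp τ (hψ'.const_add t₀)
    rw [add_sub_cancel_left, hinv_left τ hτ.le] at hxτ
    refine hxτ.congr_deriv ?_
    have := (hpos τ hτ).ne'
    field_simp
  have hy0 : ContinuousWithinAt (fun σ => x (t₀ + ψ σ)) (Ici 0) 0 :=
    ContinuousAt.comp_continuousWithinAt (by rwa [hψ0, add_zero])
      (continuousWithinAt_const.add hψ_cont)
  have hγ0 : 0 ≤ γ := by
    rw [hγ, ← (integral_add_rpow_rpow_neg hα hβ hpq hkp hkq).2]
    exact setIntegral_nonneg measurableSet_Ioi fun z (hz : 0 < z) => by positivity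
  rintro t ⟨ht₁, ht₂⟩
  have hψγ := hψ0 ▸ hψ_mono.monotoneOn self_mem_Ici hγ0 hγ0
  obtain ⟨hτ0, hψτ⟩ := hinv_right (t - t₀) ⟨by linarith, by linarith⟩
  have hγτ : γ ≤ ψinv (t - t₀) := (hψ_mono.le_iff_le hγ0 hτ0).1 (by linarith)
  have hxt :=
    eq_zero_of_hasDerivAt_neg_add_rpow_rpow_mul_sign hα hβ hpq hkp hkq hy hy0 (hγ ▸ hγτ)
  rwa [hψτ, add_sub_cancel] at hxt

/-- Scalar prototype of the non-autonomous protocol of Theorem 5: the bounded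
time-varying gain `1/(T_c Φ(ψ⁻¹(t − t₀)))` enforces convergence of the scalar
dynamics strictly before the predefined time `t₀ + T_c`, with the less
conservative settling-time bound `t₀ + ψ(γ)`. -/
theorem nonautonomous_scalar_predefined_time
    (α β k p q : ℝ) (hα : 0 < α) (hβ : 0 < β) (hk : 0 < k)
    (hp : 0 < p) (hpq : p < q) (hkp : k * p < 1) (hkq : 1 < k * q)
    (γ : ℝ)
    (hγ : γ = Real.Gamma ((1 - k * p) / (q - p)) * Real.Gamma ((k * q - 1) / (q - p)) /
        (α ^ k * Real.Gamma k * (q - p)) * (α / β) ^ ((1 - k * p) / (q - p)))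
    (Tc : ℝ) (hTc : 0 < Tc)
    (Φ : ℝ → ℝ)
    (hcont : ContinuousOn Φ (Set.Ioi 0))
    (hpos : ∀ τ : ℝ, 0 < τ → 0 < Φ τ)
    (hloc : ∀ τ : ℝ, 0 < τ → IntegrableOn Φ (Set.Ioc 0 τ))
    (hIoi : IntegrableOn Φ (Set.Ioi 0))
    (hone : ∫ ξ in Set.Ioi (0 : ℝ), Φ ξ = 1)
    (ψ : ℝ → ℝ)
    (hψ : ∀ τ : ℝ, ψ τ = Tc * ∫ ξ in (0 : ℝ)..τ, Φ ξ)
    (ψinv : ℝ → ℝ)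
    (hinv_left : ∀ τ : ℝ, 0 ≤ τ → ψinv (ψ τ) = τ)
    (hinv_right : ∀ s ∈ Set.Ico (0 : ℝ) Tc, 0 ≤ ψinv s ∧ ψ (ψinv s) = s)
    (t₀ : ℝ)
    (x : ℝ → ℝ)
    (hx : ∀ t ∈ Set.Ioo t₀ (t₀ + Tc),
      HasDerivAt x
        (-(1 / (Tc * Φ (ψinv (t - t₀)))) *
          (α * |x t| ^ p + β * |x t| ^ q) ^ k * Real.sign (x t)) t)
    (hx₀ : ContinuousAt x t₀) :
    ∀ t ∈ Set.Ico (t₀ + ψ γ) (t₀ + Tc), x t = 0 :=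
  nonautonomous_scalar_predefined_time_general α β k p q hα hβ hpq hkp hkq γ hγ Tc hTc Φ hcont hpos
    hIoi hone ψ hψ ψinv hinv_left hinv_right t₀ x hx hx₀
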